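/- Consider the activated random walk process with infinite sleep rate on a graph S with nearest-neighbor kernel P and locally finite deterministic initial occupation η₀. Let W(n) be the maximal total particle weight w(A) = Σ_{x∈A} η₀(x) over connected vertex sets A of size n containing a fixed vertex 0, and let 𝒜 = sup{n : W(n) ≥ n}. Then almost surely the connected component C₀(∞) of the set of ever-visited vertices containing 0 has size at most 𝒜. -/

import Mathlib

private lemma arw_occ {V ι : Type*} (pos : ι → ℕ → V)
    (hasync : ∀ t, {p : ι | pos p (t + 1) ≠ pos p t}.Subsingleton)
    (hsleep : ∀ p t, pos p (t + 1) ≠ pos p t → ∃ q, q ≠ p ∧ pos q t = pos p t) :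
    ∀ (v : V) (s t : ℕ), s ≤ t → (∃ p, pos p s = v) → ∃ p, pos p t = v := by
  intro v s t hst h
  induction t, hst using Nat.le_induction with
  | base => exact h
  | succ t ht ih =>
    obtain ⟨p, hp⟩ := ih
    by_cases hm : pos p (t + 1) = pos p t
    · exact ⟨p, hm.trans hp⟩
    · obtain ⟨q, hq, hqv⟩ := hsleep p t hm
      have hqm : pos q (t + 1) = pos q t := by
        by_contra hqm
        exact hq (hasync t hqm hm)
      exact ⟨q, hqm.trans (hqv.trans hp)⟩

/-- Theorem 4.1: consider the activated random walk with infinite sleep rate on a graph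
`G`, modelled by a trajectory of particles `pos : ι → ℕ → V` in which at each step at
most one particle moves, moves are nearest-neighbor, and (infinite sleep rate) a
particle may move only if some other particle shares its vertex. If the initial
occupation `η₀` is locally finite, then the connected component `C₀` containing
`zero` of the set of ever-visited vertices satisfies `|C₀| ≤ 𝒜(S, η₀)`, where
`𝒜 = sup {n : some connected n-set containing zero has weight ≥ n}`. -/
theorem stmt15 {V ι : Type*} (G : SimpleGraph V) (zero : V)
    (pos : ι → ℕ → V) (η₀ : V → ℕ)
    (hfin : ∀ x, {p : ι | pos p 0 = x}.Finite)
    (hinit : ∀ x, η₀ x = {p : ι | pos p 0 = x}.ncard)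
    (hmove : ∀ p t, pos p (t + 1) = pos p t ∨ G.Adj (pos p t) (pos p (t + 1)))
    (hasync : ∀ t, {p : ι | pos p (t + 1) ≠ pos p t}.Subsingleton)
    (hsleep : ∀ p t, pos p (t + 1) ≠ pos p t → ∃ q, q ≠ p ∧ pos q t = pos p t) :
    ({v : V | (∃ p t, pos p t = v) ∧
        Relation.ReflTransGen
          (fun a b => G.Adj a b ∧ (∃ p t, pos p t = a) ∧ (∃ p t, pos p t = b))
          zero v}).encard ≤
      sSup {n : ℕ∞ | ∃ A : Finset V,
        (∀ a ∈ A, ∀ b ∈ A,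
          Relation.ReflTransGen (fun u v => G.Adj u v ∧ u ∈ A ∧ v ∈ A) a b) ∧
        zero ∈ A ∧ (A.card : ℕ∞) = n ∧ n ≤ ∑ x ∈ A, (η₀ x : ℕ∞)} := by
  classical
  set vis : Set V := {v | ∃ p t, pos p t = v} with hvisdef
  set C : Set V := {v : V | (∃ p t, pos p t = v) ∧
      Relation.ReflTransGen
        (fun a b => G.Adj a b ∧ (∃ p t, pos p t = a) ∧ (∃ p t, pos p t = b))
        zero v} with hCdef
  set S : Set ℕ∞ := {n : ℕ∞ | ∃ A : Finset V,
      (∀ a ∈ A, ∀ b ∈ A,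
        Relation.ReflTransGen (fun u v => G.Adj u v ∧ u ∈ A ∧ v ∈ A) a b) ∧
      zero ∈ A ∧ (A.card : ℕ∞) = n ∧ n ≤ ∑ x ∈ A, (η₀ x : ℕ∞)} with hSdef
  -- the restricted connectivity relation
  let conn : Set V → V → V → Prop := fun X a b =>
    Relation.ReflTransGen (fun u v => G.Adj u v ∧ u ∈ X ∧ v ∈ X) a b
  have connMono : ∀ {X Y : Set V}, X ⊆ Y → ∀ {a b}, conn X a b → conn Y a b := by
    intro X Y hXY a b h
    exact Relation.ReflTransGen.mono (r := fun u v => G.Adj u v ∧ u ∈ X ∧ v ∈ X)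
      (p := fun u v => G.Adj u v ∧ u ∈ Y ∧ v ∈ Y)
      (fun u v ⟨h1, h2, h3⟩ => ⟨h1, hXY h2, hXY h3⟩) a b h
  have connSymm : ∀ {X : Set V} {a b}, conn X a b → conn X b a := by
    intro X a b h
    exact Relation.ReflTransGen.mono
      (r := Function.swap (fun u v => G.Adj u v ∧ u ∈ X ∧ v ∈ X))
      (p := fun u v => G.Adj u v ∧ u ∈ X ∧ v ∈ X)
      (fun u v ⟨h1, h2, h3⟩ => ⟨h1.symm, h3, h2⟩) b a
      (Relation.ReflTransGen.swap (r := fun u v => G.Adj u v ∧ u ∈ X ∧ v ∈ X) b a h)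
  -- main step: every natural below the cardinality of C is below sSup S
  have key : ∀ n : ℕ, (n : ℕ∞) ≤ C.encard → (n : ℕ∞) ≤ sSup S := by
    intro n hn
    rcases Nat.eq_zero_or_pos n with rfl | hn0
    · simp
    -- C is nonempty, hence zero is visited
    have hCne : C.Nonempty := by
      rw [Set.nonempty_iff_ne_empty]
      intro he
      rw [he, Set.encard_empty] at hn
      have : n ≤ 0 := by exact_mod_cast hn
      omega
    have hz : zero ∈ vis := by
      obtain ⟨v, hv⟩ := hCne
      rcases hv.2.cases_head with h | ⟨c, hc, _⟩
      · exact h ▸ hv.1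
      · exact hc.2.1
    -- extract a finite connected set of visited vertices from a chain
    have chainD : ∀ v, Relation.ReflTransGen
        (fun a b => G.Adj a b ∧ (∃ p t, pos p t = a) ∧ (∃ p t, pos p t = b)) zero v →
        ∃ D : Finset V, v ∈ D ∧ zero ∈ D ∧ (∀ x ∈ D, x ∈ vis) ∧
          ∀ x ∈ D, conn ↑D zero x := by
      intro v h
      induction h with
      | refl =>
        refine ⟨{zero}, by simp, by simp, ?_, ?_⟩
        · intro x hx; rw [Finset.mem_singleton] at hx; exact hx ▸ hz
        · intro x hx; rw [Finset.mem_singleton] at hx; exact hx ▸ Relation.ReflTransGen.refl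
      | tail hab hbc ih =>
        rename_i b c
        obtain ⟨D, hbD, hzD, hDvis, hDconn⟩ := ih
        refine ⟨insert c D, Finset.mem_insert_self c D, Finset.mem_insert_of_mem hzD, ?_, ?_⟩
        · intro x hx
          rcases Finset.mem_insert.mp hx with rfl | hx
          · exact hbc.2.2
          · exact hDvis x hx
        · intro x hx
          have hsub : (↑D : Set V) ⊆ ↑(insert c D) := by
            intro y hy; exact Finset.mem_insert_of_mem hy
          rcases Finset.mem_insert.mp hx with rfl | hx
          · exact (connMono hsub (hDconn b hbD)).tail
              ⟨hbc.1, Finset.mem_insert_of_mem hbD, Finset.mem_insert_self x D⟩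
          · exact connMono hsub (hDconn x hx)
    -- build a finite connected visited set containing any finite subset of C
    have build : ∀ Bs : Set V, Bs.Finite → Bs ⊆ C →
        ∃ A₀ : Finset V, Bs ⊆ ↑A₀ ∧ zero ∈ A₀ ∧ (∀ x ∈ A₀, x ∈ vis) ∧
          ∀ x ∈ A₀, conn ↑A₀ zero x := by
      intro Bs hBfin
      refine Set.Finite.induction_on (motive := fun s _ => s ⊆ C →
        ∃ A₀ : Finset V, s ⊆ ↑A₀ ∧ zero ∈ A₀ ∧ (∀ x ∈ A₀, x ∈ vis) ∧
          ∀ x ∈ A₀, conn ↑A₀ zero x) Bs hBfin ?_ ?_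
      · intro _
        refine ⟨{zero}, by simp, by simp, ?_, ?_⟩
        · intro x hx; rw [Finset.mem_singleton] at hx; exact hx ▸ hz
        · intro x hx; rw [Finset.mem_singleton] at hx; exact hx ▸ Relation.ReflTransGen.refl
      · intro a Bs' ha hBf ih hsub
        obtain ⟨A₀, hA₀sub, hA₀z, hA₀vis, hA₀conn⟩ :=
          ih (fun x hx => hsub (Set.mem_insert_of_mem a hx))
        obtain ⟨D, haD, hzD, hDvis, hDconn⟩ := chainD a (hsub (Set.mem_insert a Bs')).2
        refine ⟨A₀ ∪ D, ?_, Finset.mem_union_left D hA₀z, ?_, ?_⟩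
        · intro x hx
          rcases hx with rfl | hx
          · exact Finset.mem_union_right A₀ haD
          · exact Finset.mem_union_left D (hA₀sub hx)
        · intro x hx
          rcases Finset.mem_union.mp hx with hx | hx
          · exact hA₀vis x hx
          · exact hDvis x hx
        · intro x hx
          have h1 : (↑A₀ : Set V) ⊆ ↑(A₀ ∪ D) := by
            intro y hy; exact Finset.mem_union_left D hy
          have h2 : (↑D : Set V) ⊆ ↑(A₀ ∪ D) := by
            intro y hy; exact Finset.mem_union_right A₀ hy
          rcases Finset.mem_union.mp hx with hx | hx
          · exact connMono h1 (hA₀conn x hx)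
          · exact connMono h2 (hDconn x hx)
    -- pick a subset B of C of cardinality n, and the connected hull A₀
    obtain ⟨B, hBsub, hBcard⟩ := Set.exists_subset_encard_eq hn
    have hBfin : B.Finite := Set.finite_of_encard_eq_coe hBcard
    obtain ⟨A₀, hA₀sub, hA₀z, hA₀vis, hA₀conn⟩ := build B hBfin hBsub
    -- choose visiting times and a global time T
    have hchoose : ∀ x : V, ∃ t, x ∈ A₀ → ∃ p, pos p t = x := by
      intro x
      by_cases hx : x ∈ A₀
      · obtain ⟨p, t, h⟩ := hA₀vis x hx
        exact ⟨t, fun _ => ⟨p, h⟩⟩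
      · exact ⟨0, fun h => absurd h hx⟩
    choose f hf using hchoose
    set T := A₀.sup f with hTdef
    -- movers
    set M : Set ι := {q | ∃ s < T, pos q (s + 1) ≠ pos q s} with hMdef
    have hMfin : M.Finite := by
      have hsub : M ⊆ ⋃ s ∈ Finset.range T, {q | pos q (s + 1) ≠ pos q s} := by
        intro q ⟨s, hs, hq⟩
        exact Set.mem_biUnion (Finset.mem_range.mpr hs) hq
      exact (Set.Finite.biUnion (Finset.range T).finite_toSet
        (fun s _ => (hasync s).finite)).subset hsub
    -- the big finite visited set X
    set X : Set V := ↑A₀ ∪ ⋃ q ∈ M, (fun s => pos q s) '' Set.Iic T with hXdef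
    have hXfin : X.Finite :=
      (A₀.finite_toSet).union (hMfin.biUnion fun q _ => (Set.finite_Iic T).image _)
    -- every vertex of X is occupied at time T
    have hXocc : ∀ v ∈ X, ∃ p, pos p T = v := by
      intro v hv
      rcases hv with hv | hv
      · exact arw_occ pos hasync hsleep v (f v) T (Finset.le_sup hv) (hf v hv)
      · simp only [Set.mem_iUnion, Set.mem_image, Set.mem_Iic] at hv
        obtain ⟨q, _, s, hs, rfl⟩ := hv
        exact arw_occ pos hasync hsleep _ s T hs ⟨q, rfl⟩
    -- the component of zero within X
    set Astar : Set V := {v | v ∈ X ∧ conn X zero v} with hAstardef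
    have hAstarfin : Astar.Finite := hXfin.subset fun v hv => hv.1
    set Af : Finset V := hAstarfin.toFinset with hAfdef
    have hAfcoe : (↑Af : Set V) = Astar := hAstarfin.coe_toFinset
    have hzX : zero ∈ X := Or.inl hA₀z
    have hzAstar : zero ∈ Astar := ⟨hzX, Relation.ReflTransGen.refl⟩
    -- chains within X from zero stay in Astar
    have hcomp : ∀ v, conn X zero v → conn Astar zero v := by
      intro v h
      induction h with
      | refl => exact Relation.ReflTransGen.refl
      | tail hzb hbc ih =>
        exact ih.tail ⟨hbc.1, ⟨hbc.2.1, hzb⟩, ⟨hbc.2.2, hzb.tail hbc⟩⟩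
    -- B is contained in Astar
    have hBA : B ⊆ Astar := by
      intro b hb
      have hbA₀ : b ∈ A₀ := hA₀sub hb
      have hbX : b ∈ X := Or.inl hbA₀
      have : conn X zero b := connMono (by intro y hy; exact Or.inl hy) (hA₀conn b hbA₀)
      exact ⟨hbX, this⟩
    -- choose, for each vertex, a particle occupying it at time T
    obtain ⟨p₀, t₀, hp₀⟩ := hz
    have hXocc' : ∀ v : V, ∃ p, v ∈ X → pos p T = v := by
      intro v
      by_cases hv : v ∈ X
      · obtain ⟨p, hp⟩ := hXocc v hv
        exact ⟨p, fun _ => hp⟩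
      · exact ⟨p₀, fun h => absurd h hv⟩
    choose g hg using hXocc'
    -- the particle occupying a vertex of Astar at time T started in Astar
    have hstart : ∀ v ∈ Astar, pos (g v) 0 ∈ Astar := by
      intro v hv
      by_cases hm : g v ∈ M
      · have htraj : ∀ s, s ≤ T → pos (g v) s ∈ X := by
          intro s hs
          exact Or.inr (Set.mem_biUnion hm ⟨s, hs, rfl⟩)
        have hchain : ∀ t, t ≤ T → conn X (pos (g v) 0) (pos (g v) t) := by
          intro t
          induction t with
          | zero => intro _; exact Relation.ReflTransGen.refl
          | succ t ihT =>
            intro ht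
            have h1 := ihT (by omega)
            rcases hmove (g v) t with he | hadj
            · rwa [he]
            · exact h1.tail ⟨hadj, htraj t (by omega), htraj (t + 1) ht⟩
        have hvT : pos (g v) T = v := hg v hv.1
        have h3 := hchain T le_rfl
        rw [hvT] at h3
        exact ⟨htraj 0 (Nat.zero_le T), hv.2.trans (connSymm h3)⟩
      · have hnm : ∀ s, s < T → pos (g v) (s + 1) = pos (g v) s := by
          intro s hs
          by_contra h
          exact hm ⟨s, hs, h⟩
        have heq : ∀ t, t ≤ T → pos (g v) t = pos (g v) 0 := by
          intro t
          induction t with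
          | zero => intro _; rfl
          | succ t ihT =>
            intro ht
            rw [hnm t (by omega), ihT (by omega)]
        have h4 : pos (g v) 0 = v := (heq T le_rfl).symm.trans (hg v hv.1)
        rw [h4]
        exact hv
    -- counting: |Af| ≤ ∑_{x ∈ Af} η₀ x
    set Q : V → Finset ι := fun x => (hfin x).toFinset with hQdef
    have hQmem : ∀ x p, p ∈ Q x ↔ pos p 0 = x := by
      intro x p; exact (hfin x).mem_toFinset
    have hcard : Af.card ≤ ∑ x ∈ Af, η₀ x := by
      have hmaps : ∀ v ∈ Af, g v ∈ Af.biUnion Q := by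
        intro v hv
        rw [hAstarfin.mem_toFinset] at hv
        refine Finset.mem_biUnion.mpr ⟨pos (g v) 0, ?_, (hQmem _ _).mpr rfl⟩
        rw [hAfdef, hAstarfin.mem_toFinset]
        exact hstart v hv
      have hinj : Set.InjOn g ↑Af := by
        intro v hv w hw hgvw
        rw [hAfcoe] at hv hw
        have h1 : pos (g v) T = v := hg v hv.1
        have h2 : pos (g w) T = w := hg w hw.1
        rw [← h1, ← h2, hgvw]
      calc Af.card ≤ (Af.biUnion Q).card := Finset.card_le_card_of_injOn g hmaps hinj
        _ ≤ ∑ x ∈ Af, (Q x).card := Finset.card_biUnion_le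
        _ = ∑ x ∈ Af, η₀ x := by
            refine Finset.sum_congr rfl fun x _ => ?_
            rw [hinit x, Set.ncard_eq_toFinset_card _ (hfin x)]
    -- Af.card is an element of S
    have hmem : (Af.card : ℕ∞) ∈ S := by
      refine ⟨Af, ?_, ?_, rfl, ?_⟩
      · intro a ha b hb
        have ha' : a ∈ Astar := by rwa [← hAfcoe]
        have hb' : b ∈ Astar := by rwa [← hAfcoe]
        have h1 : conn Astar zero a := hcomp a ha'.2
        have h2 : conn Astar zero b := hcomp b hb'.2
        have := (connSymm h1).trans h2
        rw [← hAfcoe] at this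
        exact this
      · rw [hAfdef, hAstarfin.mem_toFinset]; exact hzAstar
      · calc (Af.card : ℕ∞) ≤ ((∑ x ∈ Af, η₀ x : ℕ) : ℕ∞) := by exact_mod_cast hcard
          _ = ∑ x ∈ Af, (η₀ x : ℕ∞) := by push_cast; rfl
    -- conclude
    have hnAf : (n : ℕ∞) ≤ (Af.card : ℕ∞) := by
      rw [← hBcard]
      calc B.encard ≤ Astar.encard := Set.encard_mono hBA
        _ = (Af.card : ℕ∞) := by rw [← hAfcoe, Set.encard_coe_eq_coe_finsetCard]
    exact hnAf.trans (le_sSup hmem)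
  -- finish: reduce to natural numbers
  by_cases h : C.encard = ⊤
  · rw [h, top_le_iff]
    by_contra h'
    obtain ⟨m, hm⟩ := WithTop.ne_top_iff_exists.mp h'
    have hm' : ((m : ℕ) : ℕ∞) = sSup S := hm
    have h2 := key (m + 1) (by rw [h]; exact le_top)
    rw [← hm'] at h2
    norm_cast at h2
    omega
  · obtain ⟨m, hm⟩ := WithTop.ne_top_iff_exists.mp h
    have hm' : ((m : ℕ) : ℕ∞) = C.encard := hm
    rw [← hm']
    exact key m hm'.le
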